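/- (Proposition 1) Suppose y_1,…,y_n are independent random variables with E y_i = γ'(x_{i·}ᵀ β°) for a convex differentiable γ: ℝ → ℝ, and ε_i = y_i − E y_i are σ-subgaussian. Let a ∈ (0,1), α ∈ (0,1), and set λ² = 2 a^{-2} σ² x_W² log(2p/α). Let β̂ be a (measurable) random vector that almost surely minimizes β ↦ ℓ(β) + λ Σ_{k=1}^r ‖W_k β_k‖ over ℝ^p, and assume ζ_{a,W} > 0. Then with probability at least 1 − α, |β̂ − β°|_∞² / σ² ≤ 2 (1 + a)² a^{-2} x_W² ζ_{a,W}^{-2} log(2p/α). -/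

import Mathlib

open MeasureTheory ProbabilityTheory
open scoped BigOperators ENNReal Classical

/-- The group norm `‖W_k β_k‖`. -/
noncomputable def groupNorm {r : ℕ} {p : Fin r → ℕ}
    (w β : ((k : Fin r) × Fin (p k)) → ℝ) (k : Fin r) : ℝ :=
  Real.sqrt (∑ j : Fin (p k), (w ⟨k, j⟩ * β ⟨k, j⟩) ^ 2)

/-- The sup norm `|v|_∞`. -/
noncomputable def supNorm {ι : Type*} [Fintype ι] (v : ι → ℝ) : ℝ := ⨆ c, |v c|

/-- The inner product `x_{i·}ᵀ β` of the `i`-th row of the design `X` with `β`. -/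
def dotRow {n r : ℕ} {p : Fin r → ℕ}
    (X : Fin n → ((k : Fin r) × Fin (p k)) → ℝ) (i : Fin n)
    (β : ((k : Fin r) × Fin (p k)) → ℝ) : ℝ :=
  ∑ c, X i c * β c

/-- The Euclidean norm `‖x_{j,k}‖` of column `c = (j,k)` of `X`. -/
noncomputable def colNorm {n r : ℕ} {p : Fin r → ℕ}
    (X : Fin n → ((k : Fin r) × Fin (p k)) → ℝ) (c : (k : Fin r) × Fin (p k)) : ℝ :=
  Real.sqrt (∑ i, (X i c) ^ 2)

/-- `x_W = max_{j,k} ‖x_{j,k}‖ / w_{j,k}`. -/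
noncomputable def xW {n r : ℕ} {p : Fin r → ℕ}
    (X : Fin n → ((k : Fin r) × Fin (p k)) → ℝ)
    (w : ((k : Fin r) × Fin (p k)) → ℝ) : ℝ :=
  ⨆ c, colNorm X c / w c

/-- The negative log-likelihood loss `ℓ(β) = ∑_i [γ(x_{i·}ᵀβ) − y_i x_{i·}ᵀβ]`
(at sample point `ω`). -/
noncomputable def loss {Ω : Type*} {n r : ℕ} {p : Fin r → ℕ}
    (X : Fin n → ((k : Fin r) × Fin (p k)) → ℝ) (γ : ℝ → ℝ)
    (y : Fin n → Ω → ℝ) (ω : Ω) (β : ((k : Fin r) × Fin (p k)) → ℝ) : ℝ :=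
  ∑ i, (γ (dotRow X i β) - y i ω * dotRow X i β)

/-- Coordinate `c` of `∇ℓ(β° + ν) − ∇ℓ(β°)`, which does not depend on `y`:
`∑_i (γ'(x_{i·}ᵀ(β°+ν)) − γ'(x_{i·}ᵀβ°)) x_{i,c}`. -/
noncomputable def gradDiff {n r : ℕ} {p : Fin r → ℕ}
    (X : Fin n → ((k : Fin r) × Fin (p k)) → ℝ) (γ : ℝ → ℝ)
    (βo ν : ((k : Fin r) × Fin (p k)) → ℝ) (c : (k : Fin r) × Fin (p k)) : ℝ :=
  ∑ i, (deriv γ (dotRow X i (βo + ν)) - deriv γ (dotRow X i βo)) * X i c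

/-- Membership in the cone `C_{a,W}` where `S = {k : βo_k ≠ 0}`. -/
def InCone {r : ℕ} {p : Fin r → ℕ}
    (βo w : ((k : Fin r) × Fin (p k)) → ℝ) (a : ℝ)
    (v : ((k : Fin r) × Fin (p k)) → ℝ) : Prop :=
  ∑ k : Fin r, (if ∀ j : Fin (p k), βo ⟨k, j⟩ = 0 then groupNorm w v k else 0)
    ≤ ∑ k : Fin r, (if ∀ j : Fin (p k), βo ⟨k, j⟩ = 0 then 0 else groupNorm w v k)
      + a * ∑ c, |w c * v c|

/-- The Cone Invertibility Factor
`ζ_{a,W} = inf_{0 ≠ ν ∈ C_{a,W}} |W⁻¹(∇ℓ(β°+ν) − ∇ℓ(β°))|_∞ / |ν|_∞`. -/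
noncomputable def cif {n r : ℕ} {p : Fin r → ℕ}
    (X : Fin n → ((k : Fin r) × Fin (p k)) → ℝ) (γ : ℝ → ℝ)
    (βo w : ((k : Fin r) × Fin (p k)) → ℝ) (a : ℝ) : ℝ :=
  sInf {z : ℝ | ∃ ν : ((k : Fin r) × Fin (p k)) → ℝ, ν ≠ 0 ∧ InCone βo w a ν ∧
    z = supNorm (fun c => gradDiff X γ βo ν c / w c) / supNorm ν}

/-!
On the event that the score satisfies `|∇ℓ(β°)_c| ≤ a λ w_c` for every coordinate `c`, the bound
is deterministic. Moving `β̂` along a coordinate line changes the penalty by at most `λ w_c |t|`,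
so the KKT conditions give `|∇ℓ(β̂)_c| ≤ λ w_c`. Convexity of `ℓ` and decomposability of the group
penalty put `ν = β̂ - β°` in the cone `C_{a,W}`, hence by the definition of the cone invertibility
factor `ζ |ν|_∞ ≤ |W⁻¹(∇ℓ(β̂) - ∇ℓ(β°))|_∞ ≤ (1 + a) λ`.

The score coordinate `∇ℓ(β°)_c = -∑ᵢ x_{i,c} εᵢ` is a sum of independent subgaussian variables
with variance proxy at most `σ² x_W² w_c²`, so by Hoeffding's inequality and a union bound over the
`p` coordinates the event fails with probability at most `2p exp(-a²λ²/(2σ²x_W²)) = α`.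
-/

open Filter Set Topology Real
open scoped NNReal

theorem neg_le_of_hasDerivAt_of_forall_le_add {φ : ℝ → ℝ} {D K : ℝ} (hφ : HasDerivAt φ D 0)
    (h : ∀ t, 0 < t → φ 0 ≤ φ t + K * t) : -K ≤ D := by
  have hslope : Tendsto (slope φ 0) (𝓝[>] 0) (𝓝 D) :=
    (hasDerivAt_iff_tendsto_slope.mp hφ).mono_left (nhdsWithin_mono _ fun t ht => ne_of_gt ht)
  refine ge_of_tendsto hslope ?_
  filter_upwards [self_mem_nhdsWithin] with t (ht : 0 < t)
  rw [slope_def_field, sub_zero, le_div_iff₀ ht]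
  linarith [h t ht]

theorem abs_le_of_hasDerivAt_of_forall_le_add_abs {φ : ℝ → ℝ} {D K : ℝ}
    (hφ : HasDerivAt φ D 0) (h : ∀ t, φ 0 ≤ φ t + K * |t|) : |D| ≤ K := by
  have hφneg : HasDerivAt (fun t => φ (-t)) (-D) 0 := by
    have := HasDerivAt.comp (0 : ℝ) (by simpa using hφ) (hasDerivAt_neg 0)
    simpa [Function.comp_def] using this
  rw [abs_le]
  constructor
  · exact neg_le_of_hasDerivAt_of_forall_le_add hφ fun t ht => by
      simpa [abs_of_pos ht] using h t
  · have := neg_le_of_hasDerivAt_of_forall_le_add hφneg fun t ht => by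
      simpa [abs_of_pos ht] using h (-t)
    linarith

theorem ConvexOn.deriv_mul_sub_le {γ : ℝ → ℝ} (hγ : ConvexOn ℝ univ γ)
    (hd : Differentiable ℝ γ) (x y : ℝ) : deriv γ x * (y - x) ≤ γ y - γ x := by
  rcases lt_trichotomy x y with hxy | rfl | hxy
  · have := hγ.deriv_le_slope (mem_univ x) (mem_univ y) hxy (hd x)
    rwa [slope_def_field, le_div_iff₀ (sub_pos.mpr hxy)] at this
  · simp
  · have := hγ.slope_le_deriv (mem_univ y) (mem_univ x) hxy (hd x)
    rw [slope_def_field, div_le_iff₀ (sub_pos.mpr hxy)] at this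
    linarith

theorem Real.sqrt_sum_sq_le_sum_abs {ι : Type*} (s : Finset ι) (f : ι → ℝ) :
    √(∑ i ∈ s, f i ^ 2) ≤ ∑ i ∈ s, |f i| := by
  rw [Real.sqrt_le_left (Finset.sum_nonneg fun i _ => abs_nonneg _)]
  simpa only [sq_abs] using Finset.sum_sq_le_sq_sum_of_nonneg (s := s) fun i _ => abs_nonneg (f i)

section SupNorm

variable {ι : Type*} [Fintype ι]

theorem supNorm_nonneg (v : ι → ℝ) : 0 ≤ supNorm v :=
  Real.iSup_nonneg fun _ => abs_nonneg _

theorem abs_le_supNorm (v : ι → ℝ) (c : ι) : |v c| ≤ supNorm v :=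
  le_ciSup (f := fun c => |v c|) (finite_range _).bddAbove c

theorem supNorm_le {v : ι → ℝ} {M : ℝ} (hM : 0 ≤ M) (h : ∀ c, |v c| ≤ M) : supNorm v ≤ M :=
  Real.iSup_le h hM

theorem supNorm_pos {v : ι → ℝ} (hv : v ≠ 0) : 0 < supNorm v := by
  obtain ⟨c, hc⟩ := Function.ne_iff.mp hv
  exact (abs_pos.mpr hc).trans_le (abs_le_supNorm v c)

theorem supNorm_zero : supNorm (0 : ι → ℝ) = 0 :=
  le_antisymm (supNorm_le le_rfl fun _ => by simp) (supNorm_nonneg _)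

end SupNorm

section Subgaussian

variable {Ω : Type*} [MeasurableSpace Ω] {μ : Measure Ω}

theorem hasSubgaussianMGF_of_lintegral_exp_le {X : Ω → ℝ} (hX : Measurable X) {K : ℝ≥0}
    (h : ∀ u : ℝ, ∫⁻ ω, ENNReal.ofReal (exp (u * X ω)) ∂μ ≤ ENNReal.ofReal (exp (K * u ^ 2 / 2))) :
    HasSubgaussianMGF X K μ := by
  have hint : ∀ u : ℝ, Integrable (fun ω => exp (u * X ω)) μ := fun u =>
    ⟨(hX.const_mul u).exp.aestronglyMeasurable, by
      simpa [HasFiniteIntegral, Real.enorm_eq_ofReal (exp_nonneg _)] using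
        (h u).trans_lt ENNReal.ofReal_lt_top⟩
  refine ⟨hint, fun u => ?_⟩
  rw [mgf, integral_eq_lintegral_of_nonneg_ae (ae_of_all _ fun _ => (exp_pos _).le) (hint u).1]
  exact ENNReal.toReal_le_of_le_ofReal (exp_nonneg _) (h u)

theorem ProbabilityTheory.HasSubgaussianMGF.mono {X : Ω → ℝ} {K K' : ℝ≥0}
    (h : HasSubgaussianMGF X K μ) (hK : K ≤ K') : HasSubgaussianMGF X K' μ :=
  ⟨h.integrable_exp_mul, fun t => (h.mgf_le t).trans (exp_le_exp.mpr (by gcongr))⟩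

theorem ProbabilityTheory.HasSubgaussianMGF.measureReal_abs_ge_le [IsFiniteMeasure μ]
    {X : Ω → ℝ} {K : ℝ≥0} (h : HasSubgaussianMGF X K μ) {t : ℝ} (ht : 0 ≤ t) :
    μ.real {ω | t ≤ |X ω|} ≤ 2 * exp (-t ^ 2 / (2 * K)) := by
  have hsplit : {ω | t ≤ |X ω|} ⊆ {ω | t ≤ X ω} ∪ {ω | t ≤ (-X) ω} :=
    fun ω (hω : t ≤ |X ω|) => by
      rcases le_abs'.mp hω with h | h
      · exact Or.inr (show t ≤ -X ω by linarith)
      · exact Or.inl h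
  calc μ.real {ω | t ≤ |X ω|} ≤ μ.real {ω | t ≤ X ω} + μ.real {ω | t ≤ (-X) ω} :=
        (measureReal_mono hsplit).trans (measureReal_union_le _ _)
    _ ≤ exp (-t ^ 2 / (2 * K)) + exp (-t ^ 2 / (2 * K)) :=
        add_le_add (h.measure_ge_le ht) (h.neg.measure_ge_le ht)
    _ = 2 * exp (-t ^ 2 / (2 * K)) := by ring

theorem measureReal_abs_sum_mul_ge_le {n : ℕ} {ε : Fin n → Ω → ℝ} (hind : iIndepFun ε μ)
    {K : ℝ≥0} (hε : ∀ i, HasSubgaussianMGF (ε i) K μ) (b : Fin n → ℝ) {v t : ℝ}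
    (hv : K * ∑ i, b i ^ 2 ≤ v) (ht : 0 ≤ t) :
    μ.real {ω | t ≤ |∑ i, b i * ε i ω|} ≤ 2 * exp (-t ^ 2 / (2 * v)) := by
  have := hind.isProbabilityMeasure
  have hv0 : 0 ≤ v := le_trans (by positivity) hv
  have hsum := HasSubgaussianMGF.sum_of_iIndepFun (s := Finset.univ)
    (hind.comp (fun i x => b i * x) fun i => measurable_const.mul measurable_id)
    fun i _ => (hε i).const_mul (b i)
  refine (Eq.trans_le ?_ ((hsum.mono (K' := v.toNNReal) ?_).measureReal_abs_ge_le ht)).trans_eq ?_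
  · simp
  · rw [← NNReal.coe_le_coe, Real.coe_toNNReal _ hv0, NNReal.coe_sum]
    calc _ = ∑ i, b i ^ 2 * (K : ℝ) := Finset.sum_congr rfl fun i _ => rfl
      _ ≤ v := by rw [← Finset.sum_mul]; linarith
  · rw [Real.coe_toNNReal _ hv0]

theorem measure_compl_setOf_forall_le {ι : Type*} [Fintype ι] [IsFiniteMeasure μ]
    (Z : ι → Ω → ℝ) (t : ι → ℝ) {q : ℝ} (h : ∀ c, μ.real {ω | t c ≤ Z c ω} ≤ q) :
    μ {ω | ∀ c, Z c ω ≤ t c}ᶜ ≤ ENNReal.ofReal (Fintype.card ι * q) := by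
  have hsub : {ω | ∀ c, Z c ω ≤ t c}ᶜ ⊆ ⋃ c, {ω | t c ≤ Z c ω} := fun ω hω => by
    obtain ⟨c, hc⟩ := not_forall.mp hω
    exact mem_iUnion.mpr ⟨c, (not_le.mp hc).le⟩
  rw [← ofReal_measureReal]
  refine ENNReal.ofReal_le_ofReal ((measureReal_mono hsub).trans
    ((measureReal_iUnion_fintype_le _).trans ?_))
  simpa using Finset.sum_le_sum fun c (_ : c ∈ Finset.univ) => h c

theorem ofReal_one_sub_le_measure [IsProbabilityMeasure μ] {E G : Set Ω} {α : ℝ} (hα : 0 ≤ α)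
    (hE : μ Eᶜ ≤ ENNReal.ofReal α) (hEG : ∀ᵐ ω ∂μ, ω ∈ E → ω ∈ G) :
    ENNReal.ofReal (1 - α) ≤ μ G := by
  rw [ENNReal.ofReal_sub _ hα, ENNReal.ofReal_one, tsub_le_iff_right]
  calc 1 = μ (E ∪ Eᶜ) := by rw [union_compl_self, measure_univ]
    _ ≤ μ E + μ Eᶜ := measure_union_le _ _
    _ ≤ μ G + ENNReal.ofReal α := add_le_add (measure_mono_ae hEG) hE

end Subgaussian

section GroupLasso

variable {Ω : Type*} {n r : ℕ} {p : Fin r → ℕ}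

local notation "Idx" => (k : Fin r) × Fin (p k)

def weightedBlock (w β : Idx → ℝ) (k : Fin r) : EuclideanSpace ℝ (Fin (p k)) :=
  WithLp.toLp 2 fun j => w ⟨k, j⟩ * β ⟨k, j⟩

theorem groupNorm_eq_norm_weightedBlock (w β : Idx → ℝ) (k : Fin r) :
    groupNorm w β k = ‖weightedBlock w β k‖ := by
  simp only [groupNorm, weightedBlock, EuclideanSpace.norm_eq, Real.norm_eq_abs, sq_abs]

theorem weightedBlock_add (w β d : Idx → ℝ) (k : Fin r) :
    weightedBlock w (β + d) k = weightedBlock w β k + weightedBlock w d k := by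
  ext j
  simp [weightedBlock, mul_add]

theorem sum_groupNorm_add_le (w β d : Idx → ℝ) :
    ∑ k, groupNorm w (β + d) k ≤ ∑ k, groupNorm w β k + ∑ k, groupNorm w d k := by
  rw [← Finset.sum_add_distrib]
  gcongr with k
  simp only [groupNorm_eq_norm_weightedBlock, weightedBlock_add]
  exact norm_add_le _ _

theorem sum_groupNorm_le_sum_abs (w d : Idx → ℝ) : ∑ k, groupNorm w d k ≤ ∑ c, |w c * d c| := by
  rw [Fintype.sum_sigma]
  gcongr with k
  exact Real.sqrt_sum_sq_le_sum_abs _ _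

theorem sum_offSupport_sub_sum_onSupport_le (w βo ν : Idx → ℝ) :
    ∑ k, (if ∀ j : Fin (p k), βo ⟨k, j⟩ = 0 then groupNorm w ν k else 0)
        - ∑ k, (if ∀ j : Fin (p k), βo ⟨k, j⟩ = 0 then 0 else groupNorm w ν k)
      ≤ ∑ k, groupNorm w (βo + ν) k - ∑ k, groupNorm w βo k := by
  rw [← Finset.sum_sub_distrib, ← Finset.sum_sub_distrib]
  refine Finset.sum_le_sum fun k _ => ?_
  simp only [groupNorm_eq_norm_weightedBlock, weightedBlock_add]
  split_ifs with hk
  · have hzero : weightedBlock w βo k = 0 := by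
      ext j
      simp [weightedBlock, hk j]
    simp [hzero]
  · linarith [norm_sub_le_norm_add (weightedBlock w βo k) (weightedBlock w ν k)]

section Loss

variable (X : Fin n → ((k : Fin r) × Fin (p k)) → ℝ) (γ : ℝ → ℝ) (y : Fin n → Ω → ℝ) (ω : Ω)

noncomputable def lossGrad (β : Idx → ℝ) (c : Idx) : ℝ :=
  ∑ i, (deriv γ (dotRow X i β) - y i ω) * X i c

theorem dotRow_add (i : Fin n) (β d : Idx → ℝ) :
    dotRow X i (β + d) = dotRow X i β + dotRow X i d := by
  simp [dotRow, mul_add, Finset.sum_add_distrib]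

theorem dotRow_smul (i : Fin n) (t : ℝ) (d : Idx → ℝ) : dotRow X i (t • d) = t * dotRow X i d := by
  simp [dotRow, Finset.mul_sum, mul_left_comm]

theorem sum_lossGrad_mul (β d : Idx → ℝ) :
    ∑ c, lossGrad X γ y ω β c * d c = ∑ i, (deriv γ (dotRow X i β) - y i ω) * dotRow X i d := by
  simp only [lossGrad, dotRow, Finset.sum_mul, Finset.mul_sum, mul_assoc]
  exact Finset.sum_comm

theorem hasDerivAt_loss_add_smul (hγ : Differentiable ℝ γ) (β d : Idx → ℝ) :
    HasDerivAt (fun t : ℝ => loss X γ y ω (β + t • d)) (∑ c, lossGrad X γ y ω β c * d c) 0 := by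
  rw [sum_lossGrad_mul]
  simp only [loss, dotRow_add, dotRow_smul]
  refine HasDerivAt.fun_sum fun i _ => ?_
  have hline : HasDerivAt (fun t : ℝ => dotRow X i β + t * dotRow X i d) (dotRow X i d) 0 := by
    simpa using ((hasDerivAt_id (0 : ℝ)).mul_const (dotRow X i d)).const_add (dotRow X i β)
  have hγ' : HasDerivAt γ (deriv γ (dotRow X i β)) (dotRow X i β + 0 * dotRow X i d) := by
    simpa using (hγ _).hasDerivAt
  exact ((hγ'.comp 0 hline).sub (hline.const_mul (y i ω))).congr_deriv (by ring)

theorem loss_add_sum_lossGrad_mul_le (hconv : ConvexOn ℝ univ γ) (hdiff : Differentiable ℝ γ)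
    (β d : Idx → ℝ) :
    loss X γ y ω β + ∑ c, lossGrad X γ y ω β c * d c ≤ loss X γ y ω (β + d) := by
  rw [sum_lossGrad_mul]
  simp only [loss, ← Finset.sum_add_distrib]
  gcongr with i
  have := hconv.deriv_mul_sub_le hdiff (dotRow X i β) (dotRow X i (β + d))
  rw [dotRow_add] at this ⊢
  linarith

theorem gradDiff_sub_eq (βo β : Idx → ℝ) (c : Idx) :
    gradDiff X γ βo (β - βo) c = lossGrad X γ y ω β c - lossGrad X γ y ω βo c := by
  simp only [gradDiff, lossGrad, add_sub_cancel, ← Finset.sum_sub_distrib]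
  exact Finset.sum_congr rfl fun i _ => by ring

end Loss

section Minimizer

variable {X : Fin n → ((k : Fin r) × Fin (p k)) → ℝ} {γ : ℝ → ℝ} {y : Fin n → Ω → ℝ} {ω : Ω}
  {w βo βh : ((k : Fin r) × Fin (p k)) → ℝ} {a lam : ℝ}

theorem abs_lossGrad_le_of_isMinimizer (hγ : Differentiable ℝ γ) (hlam : 0 ≤ lam)
    (hmin : ∀ β, loss X γ y ω βh + lam * ∑ k, groupNorm w βh k
      ≤ loss X γ y ω β + lam * ∑ k, groupNorm w β k)
    {c : Idx} (hwc : 0 ≤ w c) : |lossGrad X γ y ω βh c| ≤ lam * w c := by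
  set e : Idx → ℝ := Pi.single c 1
  have hder := hasDerivAt_loss_add_smul X γ y ω hγ βh e
  rw [show ∑ c', lossGrad X γ y ω βh c' * e c' = lossGrad X γ y ω βh c by
    simp [e, Pi.single_apply]] at hder
  refine abs_le_of_hasDerivAt_of_forall_le_add_abs hder fun t => ?_
  have hpen : ∑ k, groupNorm w (βh + t • e) k ≤ ∑ k, groupNorm w βh k + w c * |t| :=
    calc ∑ k, groupNorm w (βh + t • e) k
        ≤ ∑ k, groupNorm w βh k + ∑ c', |w c' * (t • e) c'| :=
          (sum_groupNorm_add_le w βh _).trans (by gcongr; exact sum_groupNorm_le_sum_abs w _)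
      _ = ∑ k, groupNorm w βh k + w c * |t| := by
          simp [e, Pi.single_apply, apply_ite (|·|), abs_mul, abs_of_nonneg hwc]
  have := hmin (βh + t • e)
  simp only [zero_smul, add_zero]
  nlinarith [mul_le_mul_of_nonneg_left hpen hlam]

theorem inCone_sub_of_isMinimizer (hconv : ConvexOn ℝ univ γ) (hdiff : Differentiable ℝ γ)
    (hw : ∀ c, 0 ≤ w c) (hlam : 0 < lam)
    (hmin : ∀ β, loss X γ y ω βh + lam * ∑ k, groupNorm w βh k
      ≤ loss X γ y ω β + lam * ∑ k, groupNorm w β k)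
    (hev : ∀ c, |lossGrad X γ y ω βo c| ≤ a * lam * w c) :
    InCone βo w a (βh - βo) := by
  set ν := βh - βo
  have hlin : -(lam * (a * ∑ c, |w c * ν c|)) ≤ ∑ c, lossGrad X γ y ω βo c * ν c := by
    rw [Finset.mul_sum, Finset.mul_sum, ← Finset.sum_neg_distrib]
    refine Finset.sum_le_sum fun c _ => neg_le_of_abs_le ?_
    rw [abs_mul, abs_mul, abs_of_nonneg (hw c)]
    calc |lossGrad X γ y ω βo c| * |ν c| ≤ a * lam * w c * |ν c| := by gcongr; exact hev c
      _ = lam * (a * (w c * |ν c|)) := by ring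
  have hfirst := loss_add_sum_lossGrad_mul_le X γ y ω hconv hdiff βo ν
  rw [add_sub_cancel] at hfirst
  have hpen : ∑ k, groupNorm w βh k - ∑ k, groupNorm w βo k ≤ a * ∑ c, |w c * ν c| :=
    le_of_mul_le_mul_left (by linarith [hmin βo]) hlam
  have hdecomp := sum_offSupport_sub_sum_onSupport_le w βo ν
  rw [add_sub_cancel] at hdecomp
  unfold InCone
  linarith

theorem cif_le_of_inCone {ν : Idx → ℝ} (hν : ν ≠ 0) (hcone : InCone βo w a ν) :
    cif X γ βo w a ≤ supNorm (fun c => gradDiff X γ βo ν c / w c) / supNorm ν :=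
  csInf_le ⟨0, by rintro _ ⟨ν', -, -, rfl⟩; exact div_nonneg (supNorm_nonneg _) (supNorm_nonneg _)⟩
    ⟨ν, hν, hcone, rfl⟩

theorem supNorm_sub_le_of_isMinimizer (hconv : ConvexOn ℝ univ γ) (hdiff : Differentiable ℝ γ)
    (hw : ∀ c, 0 < w c) (ha : 0 ≤ a) (hlam : 0 < lam) (hζ : 0 < cif X γ βo w a)
    (hmin : ∀ β, loss X γ y ω βh + lam * ∑ k, groupNorm w βh k
      ≤ loss X γ y ω β + lam * ∑ k, groupNorm w β k)
    (hev : ∀ c, |lossGrad X γ y ω βo c| ≤ a * lam * w c) :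
    supNorm (βh - βo) ≤ (1 + a) * lam / cif X γ βo w a := by
  rcases eq_or_ne (βh - βo) 0 with h0 | hν
  · rw [h0, supNorm_zero]
    positivity
  have hgrad : supNorm (fun c => gradDiff X γ βo (βh - βo) c / w c) ≤ (1 + a) * lam := by
    refine supNorm_le (by positivity) fun c => ?_
    rw [gradDiff_sub_eq X γ y ω, abs_div, abs_of_pos (hw c), div_le_iff₀ (hw c)]
    calc |lossGrad X γ y ω βh c - lossGrad X γ y ω βo c|
        ≤ |lossGrad X γ y ω βh c| + |lossGrad X γ y ω βo c| := abs_sub _ _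
      _ ≤ lam * w c + a * lam * w c :=
          add_le_add (abs_lossGrad_le_of_isMinimizer hdiff hlam.le hmin (hw c).le) (hev c)
      _ = (1 + a) * lam * w c := by ring
  have hcone := inCone_sub_of_isMinimizer hconv hdiff (fun c => (hw c).le) hlam hmin hev
  have hcif := (le_div_iff₀' (supNorm_pos hν)).mp (cif_le_of_inCone (X := X) (γ := γ) hν hcone)
  rw [le_div_iff₀ hζ]
  exact hcif.trans hgrad

end Minimizer

section Noise

variable [MeasurableSpace Ω] {μ : Measure Ω}

theorem colNorm_le_xW_mul (X : Fin n → Idx → ℝ) {w : Idx → ℝ} {c : Idx} (hw : 0 < w c) :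
    colNorm X c ≤ xW X w * w c :=
  (div_le_iff₀ hw).mp (le_ciSup (f := fun c => colNorm X c / w c) (finite_range _).bddAbove c)

theorem measureReal_abs_sum_col_ge_le {ε : Fin n → Ω → ℝ} (hind : iIndepFun ε μ) {K : ℝ≥0}
    (hε : ∀ i, HasSubgaussianMGF (ε i) K μ) (X : Fin n → Idx → ℝ) {w : Idx → ℝ} {c : Idx}
    (hw : 0 < w c) {s : ℝ} (hs : 0 ≤ s) :
    μ.real {ω | s * w c ≤ |∑ i, X i c * ε i ω|} ≤ 2 * exp (-s ^ 2 / (2 * K * xW X w ^ 2)) := by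
  have hcol : ∑ i, X i c ^ 2 ≤ (xW X w * w c) ^ 2 := by
    rw [← Real.sq_sqrt (Finset.sum_nonneg fun i _ => sq_nonneg (X i c))]
    exact pow_le_pow_left₀ (Real.sqrt_nonneg _) (colNorm_le_xW_mul X hw) 2
  refine (measureReal_abs_sum_mul_ge_le hind hε (fun i => X i c) (v := K * (xW X w * w c) ^ 2)
    (by gcongr) (by positivity)).trans_eq ?_
  rw [show -(s * w c) ^ 2 = -s ^ 2 * w c ^ 2 by ring,
    show 2 * (K * (xW X w * w c) ^ 2) = 2 * K * xW X w ^ 2 * w c ^ 2 by ring,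
    mul_div_mul_right _ _ (pow_ne_zero 2 hw.ne')]

theorem abs_lossGrad_eq_abs_sum_noise {X : Fin n → Idx → ℝ} {γ : ℝ → ℝ} {y : Fin n → Ω → ℝ}
    {βo : Idx → ℝ} (hmean : ∀ i, ∫ ω, y i ω ∂μ = deriv γ (dotRow X i βo)) (ω : Ω) (c : Idx) :
    |lossGrad X γ y ω βo c| = |∑ i, X i c * (y i ω - ∫ ω', y i ω' ∂μ)| := by
  rw [lossGrad, ← abs_neg, ← Finset.sum_neg_distrib]
  simp only [hmean]
  congr 1
  exact Finset.sum_congr rfl fun i _ => by ring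

end Noise

end GroupLasso

theorem two_mul_exp_neg_sq_div_eq {a lam σ x N α : ℝ} (ha : a ≠ 0) (hσ : σ ≠ 0) (hx : x ≠ 0)
    (hN : 0 < N) (hα : 0 < α) (hlam : lam ^ 2 = 2 * σ ^ 2 * x ^ 2 * log (2 * N / α) / a ^ 2) :
    2 * exp (-(a * lam) ^ 2 / (2 * σ ^ 2 * x ^ 2)) = α / N := by
  rw [mul_pow, hlam, show -(a ^ 2 * (2 * σ ^ 2 * x ^ 2 * log (2 * N / α) / a ^ 2)) /
    (2 * σ ^ 2 * x ^ 2) = -log (2 * N / α) by field_simp, exp_neg, exp_log (by positivity)]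
  field_simp

theorem glamer_proposition1_general
    {Ω : Type*} [MeasurableSpace Ω] (P : Measure Ω) [IsProbabilityMeasure P]
    {n r : ℕ} {p : Fin r → ℕ}
    (X : Fin n → ((k : Fin r) × Fin (p k)) → ℝ)
    (γ : ℝ → ℝ) (hγconv : ConvexOn ℝ Set.univ γ) (hγdiff : Differentiable ℝ γ)
    (y : Fin n → Ω → ℝ) (hymeas : ∀ i, Measurable (y i))
    (hindep : iIndepFun y P)
    (βo : ((k : Fin r) × Fin (p k)) → ℝ)
    (hmean : ∀ i, ∫ ω, y i ω ∂P = deriv γ (dotRow X i βo))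
    (σ : ℝ) (hσ : 0 < σ)
    (hsub : ∀ i, ∀ u : ℝ,
      ∫⁻ ω, ENNReal.ofReal (Real.exp (u * (y i ω - ∫ ω', y i ω' ∂P))) ∂P
        ≤ ENNReal.ofReal (Real.exp (σ ^ 2 * u ^ 2 / 2)))
    (w : ((k : Fin r) × Fin (p k)) → ℝ) (hw : ∀ c, 0 < w c)
    (a : ℝ) (ha : a ∈ Set.Ioo (0 : ℝ) 1) (α : ℝ) (hα : α ∈ Set.Ioo (0 : ℝ) 1)
    (lam : ℝ) (hlam : 0 < lam)
    (hlam2 : lam ^ 2 = 2 * σ ^ 2 * (xW X w) ^ 2 *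
      Real.log (2 * (Fintype.card ((k : Fin r) × Fin (p k))) / α) / a ^ 2)
    (βhat : Ω → ((k : Fin r) × Fin (p k)) → ℝ)
    (hmin : ∀ᵐ ω ∂P, ∀ β : ((k : Fin r) × Fin (p k)) → ℝ,
      loss X γ y ω (βhat ω) + lam * ∑ k : Fin r, groupNorm w (βhat ω) k
        ≤ loss X γ y ω β + lam * ∑ k : Fin r, groupNorm w β k)
    (hζ : 0 < cif X γ βo w a) :
    ENNReal.ofReal (1 - α) ≤
      P {ω | supNorm (fun c => βhat ω c - βo c) ^ 2 / σ ^ 2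
        ≤ 2 * (1 + a) ^ 2 * (xW X w) ^ 2 *
          Real.log (2 * (Fintype.card ((k : Fin r) × Fin (p k))) / α) /
            (a ^ 2 * (cif X γ βo w a) ^ 2)} := by
  set N := Fintype.card ((k : Fin r) × Fin (p k))
  have hlam2_ne : 2 * σ ^ 2 * xW X w ^ 2 * Real.log (2 * N / α) / a ^ 2 ≠ 0 :=
    hlam2 ▸ (pow_pos hlam 2).ne'
  have hxW : xW X w ≠ 0 := by rintro h; simp [h] at hlam2_ne
  have hN : (0 : ℝ) < N := Nat.cast_pos.mpr (Nat.pos_of_ne_zero fun h => by simp [h] at hlam2_ne)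
  have hexp := two_mul_exp_neg_sq_div_eq ha.1.ne' hσ.ne' hxW hN hα.1 hlam2
  set ε : Fin n → Ω → ℝ := fun i ω => y i ω - ∫ ω', y i ω' ∂P
  have hε : ∀ i, HasSubgaussianMGF (ε i) ⟨σ ^ 2, sq_nonneg σ⟩ P := fun i =>
    hasSubgaussianMGF_of_lintegral_exp_le ((hymeas i).sub_const _) (hsub i)
  have hind : iIndepFun ε P := hindep.comp _ fun i => measurable_id.sub_const _
  have hbad : P {ω | ∀ c, |lossGrad X γ y ω βo c| ≤ a * lam * w c}ᶜ ≤ ENNReal.ofReal α := by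
    have := measure_compl_setOf_forall_le (μ := P) (fun c ω => |lossGrad X γ y ω βo c|)
      (fun c => a * lam * w c) (q := α / N) fun c => by
        simp only [abs_lossGrad_eq_abs_sum_noise hmean]
        exact (measureReal_abs_sum_col_ge_le hind hε X (hw c) (mul_pos ha.1 hlam).le).trans_eq hexp
    rwa [mul_div_cancel₀ _ hN.ne'] at this
  refine ofReal_one_sub_le_measure hα.1.le hbad ?_
  filter_upwards [hmin] with ω hω hev
  have hsup := supNorm_sub_le_of_isMinimizer hγconv hγdiff hw ha.1.le hlam hζ hω hev
  calc supNorm (fun c => βhat ω c - βo c) ^ 2 / σ ^ 2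
      ≤ ((1 + a) * lam / cif X γ βo w a) ^ 2 / σ ^ 2 := by gcongr; exacts [supNorm_nonneg _, hsup]
    _ = _ := by rw [div_pow, mul_pow, hlam2]; field_simp

/-- Proposition 1: with `λ² = 2a⁻²σ²x_W² log(2p/α)`, with probability at least `1 − α`,
`|β̂ − β°|_∞² / σ² ≤ 2(1+a)² a⁻² x_W² ζ_{a,W}⁻² log(2p/α)`. -/
theorem glamer_proposition1
    {Ω : Type*} [MeasurableSpace Ω] (P : Measure Ω) [IsProbabilityMeasure P]
    {n r : ℕ} {p : Fin r → ℕ}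
    (X : Fin n → ((k : Fin r) × Fin (p k)) → ℝ)
    (γ : ℝ → ℝ) (hγconv : ConvexOn ℝ Set.univ γ) (hγdiff : Differentiable ℝ γ)
    (y : Fin n → Ω → ℝ) (hymeas : ∀ i, Measurable (y i))
    (hindep : iIndepFun y P)
    (βo : ((k : Fin r) × Fin (p k)) → ℝ)
    (hmean : ∀ i, ∫ ω, y i ω ∂P = deriv γ (dotRow X i βo))
    (σ : ℝ) (hσ : 0 < σ)
    (hsub : ∀ i, ∀ u : ℝ,
      ∫⁻ ω, ENNReal.ofReal (Real.exp (u * (y i ω - ∫ ω', y i ω' ∂P))) ∂P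
        ≤ ENNReal.ofReal (Real.exp (σ ^ 2 * u ^ 2 / 2)))
    (w : ((k : Fin r) × Fin (p k)) → ℝ) (hw : ∀ c, 0 < w c)
    (a : ℝ) (ha : a ∈ Set.Ioo (0 : ℝ) 1) (α : ℝ) (hα : α ∈ Set.Ioo (0 : ℝ) 1)
    (lam : ℝ) (hlam : 0 < lam)
    (hlam2 : lam ^ 2 = 2 * σ ^ 2 * (xW X w) ^ 2 *
      Real.log (2 * (Fintype.card ((k : Fin r) × Fin (p k))) / α) / a ^ 2)
    (βhat : Ω → ((k : Fin r) × Fin (p k)) → ℝ) (hβhat : Measurable βhat)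
    (hmin : ∀ᵐ ω ∂P, ∀ β : ((k : Fin r) × Fin (p k)) → ℝ,
      loss X γ y ω (βhat ω) + lam * ∑ k : Fin r, groupNorm w (βhat ω) k
        ≤ loss X γ y ω β + lam * ∑ k : Fin r, groupNorm w β k)
    (hζ : 0 < cif X γ βo w a) :
    ENNReal.ofReal (1 - α) ≤
      P {ω | supNorm (fun c => βhat ω c - βo c) ^ 2 / σ ^ 2
        ≤ 2 * (1 + a) ^ 2 * (xW X w) ^ 2 *
          Real.log (2 * (Fintype.card ((k : Fin r) × Fin (p k))) / α) /
            (a ^ 2 * (cif X γ βo w a) ^ 2)} :=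
  glamer_proposition1_general P X γ hγconv hγdiff y hymeas hindep βo hmean σ hσ hsub w hw a ha α hα
    lam hlam hlam2 βhat hmin hζ
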